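/- Let ℍ^+ = {(x, y, t) ∈ ℝ^{2n+1} : t > 0}. For every u ∈ C_0^∞(ℍ^+), ∫_{ℍ^+} |∇_H u|² dξ ≥ (1/4) ∫_{ℍ^+} ((|x|² + |y|²)/t²) |u|² dξ, where ∇_H u = (X_1 u, …, X_n u, Y_1 u, …, Y_n u), X_i = ∂/∂x_i + 2y_i ∂/∂t, Y_i = ∂/∂y_i − 2x_i ∂/∂t. -/

import Mathlib

open MeasureTheory Real

noncomputable section

abbrev H (n : ℕ) := (Fin n → ℝ) × (Fin n → ℝ) × ℝ

/-- Coefficient vector of the left-invariant field `X_i` at `ξ`. -/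
def Xv (n : ℕ) (i : Fin n) (ξ : H n) : H n := (Pi.single i 1, 0, 2 * ξ.2.1 i)

/-- Coefficient vector of the left-invariant field `Y_i` at `ξ`. -/
def Yv (n : ℕ) (i : Fin n) (ξ : H n) : H n := (0, Pi.single i 1, -(2 * ξ.1 i))

/-- The derivative `X_i f`. -/
def XD (n : ℕ) (i : Fin n) (f : H n → ℝ) (ξ : H n) : ℝ := fderiv ℝ f ξ (Xv n i ξ)

/-- The derivative `Y_i f`. -/
def YD (n : ℕ) (i : Fin n) (f : H n → ℝ) (ξ : H n) : ℝ := fderiv ℝ f ξ (Yv n i ξ)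

/-- Euclidean norm of the horizontal gradient. -/
def hNorm (n : ℕ) (f : H n → ℝ) (ξ : H n) : ℝ :=
  Real.sqrt (∑ i, ((XD n i f ξ) ^ 2 + (YD n i f ξ) ^ 2))

/-- Euclidean inner product on `ℝ^{2n+1}`. -/
def iprod (n : ℕ) (a b : H n) : ℝ :=
  (∑ i, a.1 i * b.1 i) + (∑ i, a.2.1 i * b.2.1 i) + a.2.2 * b.2.2

/-! ### Auxiliary material -/

instance (n : ℕ) : Measure.IsAddHaarMeasure (volume : Measure ((Fin n → ℝ) × ℝ)) :=
  Measure.prod.instIsAddHaarMeasure _ _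

instance (n : ℕ) : Measure.IsAddHaarMeasure (volume : Measure (H n)) :=
  Measure.prod.instIsAddHaarMeasure _ _

/-- Projection on the `i`-th `x`-coordinate, as a continuous linear map. -/
def clx (n : ℕ) (i : Fin n) : H n →L[ℝ] ℝ :=
  (ContinuousLinearMap.proj i).comp (ContinuousLinearMap.fst ℝ (Fin n → ℝ) ((Fin n → ℝ) × ℝ))

/-- Projection on the `i`-th `y`-coordinate, as a continuous linear map. -/
def cly (n : ℕ) (i : Fin n) : H n →L[ℝ] ℝ :=
  ((ContinuousLinearMap.proj i).comp (ContinuousLinearMap.fst ℝ (Fin n → ℝ) ℝ)).comp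
    (ContinuousLinearMap.snd ℝ (Fin n → ℝ) ((Fin n → ℝ) × ℝ))

/-- Projection on the `t`-coordinate, as a continuous linear map. -/
def clt (n : ℕ) : H n →L[ℝ] ℝ :=
  (ContinuousLinearMap.snd ℝ (Fin n → ℝ) ℝ).comp
    (ContinuousLinearMap.snd ℝ (Fin n → ℝ) ((Fin n → ℝ) × ℝ))

theorem fderiv_x (n : ℕ) (i : Fin n) (ξ v : H n) :
    fderiv ℝ (fun ξ : H n => ξ.1 i) ξ v = v.1 i := by
  rw [(show HasFDerivAt (fun ξ : H n => ξ.1 i) (clx n i) ξ from (clx n i).hasFDerivAt).fderiv]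
  rfl

theorem fderiv_y (n : ℕ) (i : Fin n) (ξ v : H n) :
    fderiv ℝ (fun ξ : H n => ξ.2.1 i) ξ v = v.2.1 i := by
  rw [(show HasFDerivAt (fun ξ : H n => ξ.2.1 i) (cly n i) ξ from (cly n i).hasFDerivAt).fderiv]
  rfl

/-- The function `|x|² + |y|²`. -/
def qf (n : ℕ) : H n → ℝ := fun ξ => (∑ i, ξ.1 i ^ 2) + ∑ i, ξ.2.1 i ^ 2

theorem qf_contDiff (n : ℕ) : ContDiff ℝ (⊤ : ℕ∞) (qf n) := by
  apply ContDiff.add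
  · exact ContDiff.sum fun i _ => ((clx n i).contDiff : ContDiff ℝ (⊤ : ℕ∞) fun ξ : H n => ξ.1 i).pow 2
  · exact ContDiff.sum fun i _ => ((cly n i).contDiff : ContDiff ℝ (⊤ : ℕ∞) fun ξ : H n => ξ.2.1 i).pow 2

theorem fderiv_qf (n : ℕ) (ξ : H n) : fderiv ℝ (qf n) ξ ((0, 0, 1) : H n) = 0 := by
  have hx' : ∀ i, HasFDerivAt (fun ξ : H n => ξ.1 i) (clx n i) ξ := fun i => (clx n i).hasFDerivAt
  have hy' : ∀ i, HasFDerivAt (fun ξ : H n => ξ.2.1 i) (cly n i) ξ := fun i =>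
    (cly n i).hasFDerivAt
  have h1 : HasFDerivAt (fun ξ : H n => ∑ i, ξ.1 i * ξ.1 i)
      (∑ i, (ξ.1 i • clx n i + ξ.1 i • clx n i)) ξ :=
    HasFDerivAt.fun_sum fun i _ => (hx' i).mul (hx' i)
  have h2 : HasFDerivAt (fun ξ : H n => ∑ i, ξ.2.1 i * ξ.2.1 i)
      (∑ i, (ξ.2.1 i • cly n i + ξ.2.1 i • cly n i)) ξ :=
    HasFDerivAt.fun_sum fun i _ => (hy' i).mul (hy' i)
  have hqe : qf n = fun ξ : H n => (∑ i, ξ.1 i * ξ.1 i) + ∑ i, ξ.2.1 i * ξ.2.1 i := by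
    funext ξ; simp [qf, pow_two]
  rw [hqe, (show HasFDerivAt (fun ξ : H n => (∑ i, ξ.1 i * ξ.1 i) + ∑ i, ξ.2.1 i * ξ.2.1 i) _ ξ from h1.add h2).fderiv]
  have hx : ∀ i, clx n i ((0, 0, 1) : H n) = 0 := fun i => rfl
  have hy : ∀ i, cly n i ((0, 0, 1) : H n) = 0 := fun i => rfl
  simp [ContinuousLinearMap.add_apply, ContinuousLinearMap.sum_apply,
    ContinuousLinearMap.smul_apply, hx, hy]

/-- The main divergence theorem ingredient: the directional derivative of the compactly
supported `C¹` function `c · u² / t` integrates to zero. -/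
theorem divg (n : ℕ) (u : H n → ℝ) (hu : ContDiff ℝ (⊤ : ℕ∞) u) (hc : HasCompactSupport u)
    (hsupp : tsupport u ⊆ {ξ : H n | 0 < ξ.2.2}) (c : H n → ℝ) (hcd : ContDiff ℝ (⊤ : ℕ∞) c) (v : H n) :
    Integrable (fun ξ => fderiv ℝ (fun ξ => c ξ * u ξ ^ 2 / ξ.2.2) ξ v) ∧
    ∫ ξ, fderiv ℝ (fun ξ => c ξ * u ξ ^ 2 / ξ.2.2) ξ v = 0 := by
  set F : H n → ℝ := fun ξ => c ξ * u ξ ^ 2 / ξ.2.2 with hFdef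
  have hFsmooth : ContDiff ℝ 1 F := by
    rw [contDiff_iff_contDiffAt]
    intro ξ
    by_cases ht : 0 < ξ.2.2
    · exact ((hcd.contDiffAt.of_le (by simp)).mul (hu.contDiffAt.of_le (by simp) |>.pow 2)).div
        ((clt n).contDiff.contDiffAt) (ne_of_gt ht)
    · have hξ : ξ ∉ tsupport u := fun h => ht (hsupp h)
      have hev : ∀ᶠ ξ' in nhds ξ, u ξ' = 0 := by
        filter_upwards [(isClosed_tsupport u).isOpen_compl.mem_nhds hξ] with ξ' hξ'
          using image_eq_zero_of_notMem_tsupport hξ'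
      have hev' : F =ᶠ[nhds ξ] fun _ => (0 : ℝ) := by
        filter_upwards [hev] with ξ' h using by simp [hFdef, h]
      exact (contDiffAt_const (c := (0:ℝ))).congr_of_eventuallyEq hev'
  have hFc : HasCompactSupport F := hc.mono (by
    intro ξ hξ
    simp only [Function.mem_support] at hξ ⊢
    intro h0; exact hξ (by simp [hFdef, h0]))
  have hInt : Integrable F := hFsmooth.continuous.integrable_of_hasCompactSupport hFc
  have hcont' : Continuous fun ξ => fderiv ℝ F ξ v :=
    (hFsmooth.continuous_fderiv one_ne_zero).clm_apply continuous_const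
  have hsupp' : HasCompactSupport fun ξ => fderiv ℝ F ξ v := (hFc.fderiv ℝ).mono (by
    intro ξ hξ
    simp only [Function.mem_support] at hξ ⊢
    intro h0; rw [h0] at hξ; simp at hξ)
  have hInt' : Integrable (fun ξ => fderiv ℝ F ξ v) :=
    hcont'.integrable_of_hasCompactSupport hsupp'
  refine ⟨hInt', ?_⟩
  have h0 : (fun x : H n => fderiv ℝ (fun _ => (1:ℝ)) x v * F x) = fun _ => (0:ℝ) := by
    funext x; simp
  have key := integral_mul_fderiv_eq_neg_fderiv_mul_of_integrable
      (μ := (volume : Measure (H n))) (f := fun _ : H n => (1:ℝ)) (g := F) (v := v)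
      (by rw [h0]; exact integrable_zero _ _ _)
      (by simpa using hInt') (by simpa using hInt)
      (fun x _ => differentiable_const _ x) (fun x _ => hFsmooth.differentiable one_ne_zero x)
  rw [h0] at key
  simpa using key

/-- The explicit formula for the directional derivative of `c · u² / t` at points with `t > 0`. -/
theorem fderiv_formula (n : ℕ) (u : H n → ℝ) (hu : ContDiff ℝ (⊤ : ℕ∞) u) (c : H n → ℝ)
    (hcd : ContDiff ℝ (⊤ : ℕ∞) c) (v : H n) (ξ : H n) (ht : 0 < ξ.2.2) :
    fderiv ℝ (fun ξ => c ξ * u ξ ^ 2 / ξ.2.2) ξ v =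
      ((fderiv ℝ c ξ v * u ξ ^ 2 + c ξ * (2 * u ξ * fderiv ℝ u ξ v)) * ξ.2.2
        - c ξ * u ξ ^ 2 * v.2.2) / ξ.2.2 ^ 2 := by
  have hne : ξ.2.2 ≠ 0 := ne_of_gt ht
  have hdiff : DifferentiableAt ℝ (fun ξ : H n => c ξ * u ξ ^ 2 / ξ.2.2) ξ :=
    (((hcd.contDiffAt.of_le (by simp)).mul ((hu.contDiffAt.of_le (by simp)).pow 2)).div
      ((clt n).contDiff.contDiffAt) hne).differentiableAt one_ne_zero
  have h0 : ξ + (0:ℝ) • v = ξ := by simp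
  have hγ : HasDerivAt (fun s : ℝ => ξ + s • v) v 0 := by
    simpa using ((hasDerivAt_id (0:ℝ)).smul_const v).const_add ξ
  have hcl : HasDerivAt (fun s : ℝ => c (ξ + s • v)) (fderiv ℝ c ξ v) 0 := by
    have h := ((hcd.differentiable (by simp) (ξ + (0:ℝ) • v)).hasFDerivAt).comp_hasDerivAt 0 hγ
    rw [h0] at h
    exact h
  have hul : HasDerivAt (fun s : ℝ => u (ξ + s • v)) (fderiv ℝ u ξ v) 0 := by
    have h := ((hu.differentiable (by simp) (ξ + (0:ℝ) • v)).hasFDerivAt).comp_hasDerivAt 0 hγ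
    rw [h0] at h
    exact h
  have htl : HasDerivAt (fun s : ℝ => (ξ + s • v).2.2) (v.2.2) 0 := by
    have h : HasDerivAt (fun s : ℝ => ξ.2.2 + s * v.2.2) (v.2.2) 0 := by
      simpa using ((hasDerivAt_id (0:ℝ)).mul_const v.2.2).const_add ξ.2.2
    exact h
  have hline := (hcl.mul (hul.pow 2)).div htl (by rw [h0]; exact hne)
  have hL : HasLineDerivAt ℝ (fun ξ : H n => c ξ * u ξ ^ 2 / ξ.2.2)
      (((fderiv ℝ c ξ v * u (ξ + (0:ℝ) • v) ^ 2 +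
          c (ξ + (0:ℝ) • v) * ((2:ℕ) * u (ξ + (0:ℝ) • v) ^ (2-1) * fderiv ℝ u ξ v)) *
          (ξ + (0:ℝ) • v).2.2 -
          c (ξ + (0:ℝ) • v) * u (ξ + (0:ℝ) • v) ^ 2 * v.2.2) / (ξ + (0:ℝ) • v).2.2 ^ 2) ξ v :=
    hline
  rw [← hdiff.lineDeriv_eq_fderiv, hL.lineDeriv, h0]
  push_cast
  ring

/-- Outside the support everything vanishes. -/
theorem outside_zero (n : ℕ) (u : H n → ℝ) (ξ : H n) (hξ : ξ ∉ tsupport u) :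
    u ξ = 0 ∧ fderiv ℝ u ξ = 0 ∧ ∀ᶠ ξ' in nhds ξ, u ξ' = 0 := by
  have hev : ∀ᶠ ξ' in nhds ξ, u ξ' = 0 := by
    filter_upwards [(isClosed_tsupport u).isOpen_compl.mem_nhds hξ] with ξ' h
      using image_eq_zero_of_notMem_tsupport h
  refine ⟨image_eq_zero_of_notMem_tsupport hξ, ?_, hev⟩
  have h : fderiv ℝ u ξ = fderiv ℝ (fun _ => (0:ℝ)) ξ :=
    Filter.EventuallyEq.fderiv_eq hev
  simp [h]

theorem gzero (n : ℕ) (u : H n → ℝ) (ξ : H n) (hev : ∀ᶠ ξ' in nhds ξ, u ξ' = 0)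
    (c : H n → ℝ) (v : H n) :
    fderiv ℝ (fun ξ => c ξ * u ξ ^ 2 / ξ.2.2) ξ v = 0 := by
  have h : (fun ξ : H n => c ξ * u ξ ^ 2 / ξ.2.2) =ᶠ[nhds ξ] fun _ => (0:ℝ) := by
    filter_upwards [hev] with ξ' h using by simp [h]
  rw [h.fderiv_eq]; simp

theorem luan_young_hardy (n : ℕ) (u : H n → ℝ)
    (hu : ContDiff ℝ (⊤ : ℕ∞) u) (hc : HasCompactSupport u)
    (hsupp : tsupport u ⊆ {ξ : H n | 0 < ξ.2.2}) :
    ∫ ξ in {ξ : H n | 0 < ξ.2.2}, hNorm n u ξ ^ 2 ≥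
      (1 / 4) *
        ∫ ξ in {ξ : H n | 0 < ξ.2.2},
          ((∑ i, (ξ.1 i) ^ 2) + (∑ i, (ξ.2.1 i) ^ 2)) / ξ.2.2 ^ 2 * |u ξ| ^ 2 := by
  classical
  set W : H n → ℝ := fun ξ => ((∑ i, ξ.1 i ^ 2) + ∑ i, ξ.2.1 i ^ 2) / ξ.2.2 ^ 2 * u ξ ^ 2
    with hWdef
  set g1 : Fin n → H n → ℝ := fun i ξ =>
    fderiv ℝ (fun ξ : H n => ξ.2.1 i * u ξ ^ 2 / ξ.2.2) ξ ((Pi.single i 1, 0, 0) : H n)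
    with hg1def
  set g2 : Fin n → H n → ℝ := fun i ξ =>
    fderiv ℝ (fun ξ : H n => ξ.1 i * u ξ ^ 2 / ξ.2.2) ξ ((0, Pi.single i 1, 0) : H n)
    with hg2def
  set g3 : H n → ℝ := fun ξ =>
    fderiv ℝ (fun ξ : H n => qf n ξ * u ξ ^ 2 / ξ.2.2) ξ ((0, 0, 1) : H n) with hg3def
  set G : H n → ℝ := fun ξ => (∑ i, (g1 i ξ - g2 i ξ)) + 2 * g3 ξ with hGdef
  set P : H n → ℝ := fun ξ => ∑ i, (XD n i u ξ ^ 2 + YD n i u ξ ^ 2) with hPdef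
  -- divergence identities
  have hd1 : ∀ i, Integrable (g1 i) ∧ ∫ ξ, g1 i ξ = 0 := fun i =>
    divg n u hu hc hsupp (fun ξ => ξ.2.1 i) ((cly n i).contDiff) _
  have hd2 : ∀ i, Integrable (g2 i) ∧ ∫ ξ, g2 i ξ = 0 := fun i =>
    divg n u hu hc hsupp (fun ξ => ξ.1 i) ((clx n i).contDiff) _
  have hd3 : Integrable g3 ∧ ∫ ξ, g3 ξ = 0 :=
    divg n u hu hc hsupp (qf n) (qf_contDiff n) _
  have hsumInt : Integrable (fun ξ => ∑ i, (g1 i ξ - g2 i ξ)) :=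
    integrable_finset_sum _ fun i _ => ((hd1 i).1.sub (hd2 i).1)
  have hGint : Integrable G := hsumInt.add ((hd3).1.const_mul 2)
  have hGzero : ∫ ξ, G ξ = 0 := by
    have h1 : ∫ ξ, G ξ = (∫ ξ, ∑ i, (g1 i ξ - g2 i ξ)) + ∫ ξ, 2 * g3 ξ :=
      integral_add hsumInt ((hd3).1.const_mul 2)
    have h2 : ∫ ξ, ∑ i, (g1 i ξ - g2 i ξ) = ∑ i, ∫ ξ, (g1 i ξ - g2 i ξ) :=
      integral_finset_sum _ fun i _ => ((hd1 i).1.sub (hd2 i).1)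
    have h3 : ∀ i ∈ Finset.univ, ∫ ξ, (g1 i ξ - g2 i ξ) = 0 := fun i _ => by
      rw [integral_sub (hd1 i).1 (hd2 i).1, (hd1 i).2, (hd2 i).2, sub_zero]
    have h4 : ∫ ξ, 2 * g3 ξ = 2 * ∫ ξ, g3 ξ := integral_const_mul 2 _
    rw [h1, h2, Finset.sum_congr rfl h3, h4, (hd3).2]
    simp
  -- pointwise inequality
  have hPW : ∀ ξ, G ξ + W ξ ≤ P ξ := by
    intro ξ
    by_cases hts : 0 < ξ.2.2
    · have hne : ξ.2.2 ≠ 0 := ne_of_gt hts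
      set a : Fin n → ℝ := fun i => fderiv ℝ u ξ ((Pi.single i 1, 0, 0) : H n) with hadef
      set b : Fin n → ℝ := fun i => fderiv ℝ u ξ ((0, Pi.single i 1, 0) : H n) with hbdef
      set ww : ℝ := fderiv ℝ u ξ ((0, 0, 1) : H n) with hwwdef
      have e1 : ∀ i, g1 i ξ = (ξ.2.1 i * (2 * u ξ * a i) * ξ.2.2) / ξ.2.2 ^ 2 := by
        intro i
        show fderiv ℝ (fun ξ : H n => ξ.2.1 i * u ξ ^ 2 / ξ.2.2) ξ
          ((Pi.single i 1, 0, 0) : H n) = _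
        rw [fderiv_formula n u hu (fun ξ : H n => ξ.2.1 i) ((cly n i).contDiff) _ ξ hts,
          fderiv_y]
        simp [hadef]
      have e2 : ∀ i, g2 i ξ = (ξ.1 i * (2 * u ξ * b i) * ξ.2.2) / ξ.2.2 ^ 2 := by
        intro i
        show fderiv ℝ (fun ξ : H n => ξ.1 i * u ξ ^ 2 / ξ.2.2) ξ
          ((0, Pi.single i 1, 0) : H n) = _
        rw [fderiv_formula n u hu (fun ξ : H n => ξ.1 i) ((clx n i).contDiff) _ ξ hts,
          fderiv_x]
        simp [hbdef]
      have e3 : g3 ξ = (qf n ξ * (2 * u ξ * ww) * ξ.2.2 - qf n ξ * u ξ ^ 2) / ξ.2.2 ^ 2 := by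
        show fderiv ℝ (fun ξ : H n => qf n ξ * u ξ ^ 2 / ξ.2.2) ξ ((0, 0, 1) : H n) = _
        rw [fderiv_formula n u hu (qf n) (qf_contDiff n) _ ξ hts, fderiv_qf]
        simp [hwwdef]
      have eX : ∀ i, XD n i u ξ = a i + 2 * ξ.2.1 i * ww := by
        intro i
        have hv : Xv n i ξ = ((Pi.single i 1, 0, 0) : H n) + (2 * ξ.2.1 i) • ((0, 0, 1) : H n) := by
          simp [Xv, Prod.ext_iff]
        rw [XD, hv, map_add, _root_.map_smul]
        simp [hadef, hwwdef, smul_eq_mul]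
      have eY : ∀ i, YD n i u ξ = b i - 2 * ξ.1 i * ww := by
        intro i
        have hv : Yv n i ξ = ((0, Pi.single i 1, 0) : H n) + (-(2 * ξ.1 i)) • ((0, 0, 1) : H n) := by
          simp [Yv, Prod.ext_iff]
        rw [YD, hv, map_add, _root_.map_smul]
        simp [hbdef, hwwdef, smul_eq_mul]
        ring
      have hq2 : 2 * g3 ξ + W ξ =
          ∑ i, (ξ.1 i ^ 2 + ξ.2.1 i ^ 2) * ((4 * u ξ * ww * ξ.2.2 - u ξ ^ 2) / ξ.2.2 ^ 2) := by
        rw [← Finset.sum_mul]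
        have hsum : ∑ i, (ξ.1 i ^ 2 + ξ.2.1 i ^ 2) = qf n ξ := by
          rw [Finset.sum_add_distrib]; rfl
        rw [hsum, e3, hWdef]
        show 2 * ((qf n ξ * (2 * u ξ * ww) * ξ.2.2 - qf n ξ * u ξ ^ 2) / ξ.2.2 ^ 2) +
          ((∑ i, ξ.1 i ^ 2) + ∑ i, ξ.2.1 i ^ 2) / ξ.2.2 ^ 2 * u ξ ^ 2 =
          qf n ξ * ((4 * u ξ * ww * ξ.2.2 - u ξ ^ 2) / ξ.2.2 ^ 2)
        have : ((∑ i, ξ.1 i ^ 2) + ∑ i, ξ.2.1 i ^ 2) = qf n ξ := rfl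
        rw [this]
        field_simp
        ring
      have step : G ξ + W ξ =
          ∑ i, ((ξ.2.1 i * (2 * u ξ * a i) * ξ.2.2) / ξ.2.2 ^ 2
            - (ξ.1 i * (2 * u ξ * b i) * ξ.2.2) / ξ.2.2 ^ 2
            + (ξ.1 i ^ 2 + ξ.2.1 i ^ 2) * ((4 * u ξ * ww * ξ.2.2 - u ξ ^ 2) / ξ.2.2 ^ 2)) := by
        have hGexp : G ξ = (∑ i, (g1 i ξ - g2 i ξ)) + 2 * g3 ξ := rfl
        have hss : ∑ i, (g1 i ξ - g2 i ξ) =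
            ∑ i, ((ξ.2.1 i * (2 * u ξ * a i) * ξ.2.2) / ξ.2.2 ^ 2
              - (ξ.1 i * (2 * u ξ * b i) * ξ.2.2) / ξ.2.2 ^ 2) := by
          refine Finset.sum_congr rfl fun i _ => ?_
          rw [e1 i, e2 i]
        rw [hGexp, Finset.sum_add_distrib, ← hq2, hss]
        ring
      rw [step, hPdef]
      refine Finset.sum_le_sum fun i _ => ?_
      rw [eX i, eY i]
      have key : ((a i + 2 * ξ.2.1 i * ww) ^ 2 + (b i - 2 * ξ.1 i * ww) ^ 2)
          - ((ξ.2.1 i * (2 * u ξ * a i) * ξ.2.2) / ξ.2.2 ^ 2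
            - (ξ.1 i * (2 * u ξ * b i) * ξ.2.2) / ξ.2.2 ^ 2
            + (ξ.1 i ^ 2 + ξ.2.1 i ^ 2) * ((4 * u ξ * ww * ξ.2.2 - u ξ ^ 2) / ξ.2.2 ^ 2)) =
          ((a i * ξ.2.2 + 2 * ξ.2.1 i * ww * ξ.2.2 - ξ.2.1 i * u ξ) ^ 2
            + (b i * ξ.2.2 - 2 * ξ.1 i * ww * ξ.2.2 + ξ.1 i * u ξ) ^ 2) / ξ.2.2 ^ 2 := by
        field_simp
        ring
      nlinarith [div_nonneg
        (add_nonneg (sq_nonneg (a i * ξ.2.2 + 2 * ξ.2.1 i * ww * ξ.2.2 - ξ.2.1 i * u ξ))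
          (sq_nonneg (b i * ξ.2.2 - 2 * ξ.1 i * ww * ξ.2.2 + ξ.1 i * u ξ)))
        (sq_nonneg ξ.2.2), key]
    · have hξ : ξ ∉ tsupport u := fun h => hts (hsupp h)
      obtain ⟨hu0, hfd, hev⟩ := outside_zero n u ξ hξ
      have hg10 : ∀ i, g1 i ξ = 0 := fun i => gzero n u ξ hev _ _
      have hg20 : ∀ i, g2 i ξ = 0 := fun i => gzero n u ξ hev _ _
      have hg30 : g3 ξ = 0 := gzero n u ξ hev _ _
      have hP0 : P ξ = 0 := by
        rw [hPdef]
        simp [XD, YD, hfd]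
      have hW0 : W ξ = 0 := by rw [hWdef]; simp [hu0]
      have hG0 : G ξ = 0 := by
        rw [hGdef]; simp [hg10, hg20, hg30]
      rw [hP0, hW0, hG0]; simp
  -- continuity and integrability of W
  have hWcont : Continuous W := by
    rw [continuous_iff_continuousAt]
    intro ξ
    by_cases hts : 0 < ξ.2.2
    · apply ContinuousAt.mul
      · apply ContinuousAt.div
        · exact ((qf_contDiff n).continuous).continuousAt
        · exact (continuous_snd.snd.pow 2).continuousAt
        · exact pow_ne_zero 2 (ne_of_gt hts)
      · exact ((hu.continuous).pow 2).continuousAt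
    · have hξ : ξ ∉ tsupport u := fun h => hts (hsupp h)
      obtain ⟨hu0, hfd, hev⟩ := outside_zero n u ξ hξ
      have hWev : W =ᶠ[nhds ξ] fun _ => (0:ℝ) := by
        filter_upwards [hev] with ξ' h using by simp [hWdef, h]
      exact continuousAt_const.congr hWev.symm
  have hWsupp : HasCompactSupport W := hc.mono (by
    intro ξ hξ
    simp only [Function.mem_support] at hξ ⊢
    intro h0; exact hξ (by simp [hWdef, h0]))
  have hWint : Integrable W := hWcont.integrable_of_hasCompactSupport hWsupp
  -- continuity and integrability of P
  have hXDc : ∀ i, Continuous (XD n i u) := by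
    intro i
    apply (hu.continuous_fderiv (by simp)).clm_apply
    unfold Xv
    exact continuous_const.prodMk (continuous_const.prodMk
      (continuous_const.mul ((continuous_apply i).comp continuous_snd.fst)))
  have hYDc : ∀ i, Continuous (YD n i u) := by
    intro i
    apply (hu.continuous_fderiv (by simp)).clm_apply
    unfold Yv
    exact continuous_const.prodMk (continuous_const.prodMk
      ((continuous_const.mul ((continuous_apply i).comp continuous_fst)).neg))
  have hPcont : Continuous P := by
    rw [hPdef]
    exact continuous_finset_sum _ fun i _ => (((hXDc i).pow 2).add ((hYDc i).pow 2))
  have hPsupp : HasCompactSupport P := by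
    apply HasCompactSupport.intro hc
    intro ξ hξ
    obtain ⟨hu0, hfd, hev⟩ := outside_zero n u ξ hξ
    rw [hPdef]; simp [XD, YD, hfd]
  have hPint : Integrable P := hPcont.integrable_of_hasCompactSupport hPsupp
  -- main integral inequality
  have h1 : ∫ ξ, W ξ ≤ ∫ ξ, P ξ := by
    have hmono := integral_mono (hGint.add hWint) hPint (fun ξ => hPW ξ)
    simp only [Pi.add_apply] at hmono
    rw [integral_add hGint hWint, hGzero, zero_add] at hmono
    exact hmono
  have hWnonneg : 0 ≤ ∫ ξ, W ξ := by
    apply integral_nonneg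
    intro ξ
    rw [hWdef]
    positivity
  -- rewriting the two sides
  have hL : ∫ ξ in {ξ : H n | 0 < ξ.2.2}, hNorm n u ξ ^ 2 = ∫ ξ, P ξ := by
    have hptw : ∀ ξ, hNorm n u ξ ^ 2 = P ξ := by
      intro ξ
      rw [hNorm, hPdef, Real.sq_sqrt]
      positivity
    calc ∫ ξ in {ξ : H n | 0 < ξ.2.2}, hNorm n u ξ ^ 2
        = ∫ ξ in {ξ : H n | 0 < ξ.2.2}, P ξ := by
          exact integral_congr_ae (Filter.EventuallyEq.restrict
            (Filter.Eventually.of_forall hptw))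
      _ = ∫ ξ, P ξ := by
          apply setIntegral_eq_integral_of_forall_compl_eq_zero
          intro ξ hξ
          have hξ' : ξ ∉ tsupport u := fun h => hξ (hsupp h)
          obtain ⟨hu0, hfd, hev⟩ := outside_zero n u ξ hξ'
          rw [hPdef]; simp [XD, YD, hfd]
  have hR : ∫ ξ in {ξ : H n | 0 < ξ.2.2},
      ((∑ i, (ξ.1 i) ^ 2) + (∑ i, (ξ.2.1 i) ^ 2)) / ξ.2.2 ^ 2 * |u ξ| ^ 2 = ∫ ξ, W ξ := by
    have hptw : ∀ ξ : H n,
        ((∑ i, (ξ.1 i) ^ 2) + (∑ i, (ξ.2.1 i) ^ 2)) / ξ.2.2 ^ 2 * |u ξ| ^ 2 = W ξ := by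
      intro ξ
      rw [hWdef, sq_abs]
    calc ∫ ξ in {ξ : H n | 0 < ξ.2.2},
        ((∑ i, (ξ.1 i) ^ 2) + (∑ i, (ξ.2.1 i) ^ 2)) / ξ.2.2 ^ 2 * |u ξ| ^ 2
        = ∫ ξ in {ξ : H n | 0 < ξ.2.2}, W ξ :=
          integral_congr_ae (Filter.EventuallyEq.restrict (Filter.Eventually.of_forall hptw))
      _ = ∫ ξ, W ξ := by
          apply setIntegral_eq_integral_of_forall_compl_eq_zero
          intro ξ hξ
          have hξ' : ξ ∉ tsupport u := fun h => hξ (hsupp h)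
          obtain ⟨hu0, hfd, hev⟩ := outside_zero n u ξ hξ'
          rw [hWdef]; simp [hu0]
  rw [ge_iff_le, hL, hR]
  linarith

end
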